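/- arXiv:2312.00913 — 8 statements merged into one kernel-verified Lean document; each statement's English description precedes it below -/
import Mathlib

section
/- Let M be a matroid on ground set E and ê ∈ E an element that is neither a loop nor a coloop. Then T̂_M = (1 + s·t_ê)·T̂_{M∖ê} + (1 + r·t_ê)·T̂_{M/ê}. -/
open Finset MvPolynomial

/-- A matroid on a finite ground set `E`, presented by its rank function. -/
structure FinMatroid (α : Type) [DecidableEq α] where
  E : Finset α
  rk : Finset α → ℕ
  rk_empty : rk ∅ = 0
  rk_le_card : ∀ S : Finset α, rk S ≤ S.card
  rk_mono : ∀ ⦃S T : Finset α⦄, S ⊆ T → rk S ≤ rk T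
  rk_submodular : ∀ S T : Finset α, rk (S ∪ T) + rk (S ∩ T) ≤ rk S + rk T

namespace FinMatroid

variable {α : Type} [DecidableEq α]

/-- The equivariant Tutte polynomial of `M`, evaluated at `x y r s : R` and `t : α → R`. -/
def eqTutte (M : FinMatroid α) {R : Type} [CommRing R] (x y r s : R) (t : α → R) : R :=
  ∑ S ∈ M.E.powerset,
    (x - 1) ^ (M.rk M.E - M.rk S) * (y - 1) ^ (S.card - M.rk S) *
      (∏ e ∈ S, (1 + r * t e)) * (∏ e ∈ M.E \ S, (1 + s * t e))

/-- The classical Tutte polynomial of `M`. -/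
def tutte (M : FinMatroid α) {R : Type} [CommRing R] (x y : R) : R :=
  ∑ S ∈ M.E.powerset,
    (x - 1) ^ (M.rk M.E - M.rk S) * (y - 1) ^ (S.card - M.rk S)

/-- `e` is a loop of `M`. -/
def IsLoop (M : FinMatroid α) (e : α) : Prop := M.rk {e} = 0

/-- `e` is a coloop of `M` : it belongs to every basis of `M`. -/
def IsColoop (M : FinMatroid α) (e : α) : Prop :=
  ∀ B ⊆ M.E, M.rk B = B.card → M.rk B = M.rk M.E → e ∈ B

end FinMatroid

/-! Split the subsets `S ⊆ E` according to whether `e ∈ S`. For `e ∉ S` the summand is that of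
`M ∖ e` times the factor `1 + s t_e` of `e ∈ E \ S`; the corank is unchanged because `e` is not a
coloop. For `e ∈ S` it is the summand of `M / e` at `S \ {e}` times `1 + r t_e`: since `e` is not a
loop, contracting lowers every rank `rk (insert e S)` by exactly one, so corank and nullity agree. -/

namespace FinMatroid

variable {α : Type} [DecidableEq α] (M : FinMatroid α) {e : α}

lemma rk_singleton_eq_one_of_not_isLoop (hloop : ¬ M.IsLoop e) : M.rk {e} = 1 := by
  have := M.rk_le_card {e}
  rw [card_singleton] at this
  exact le_antisymm this (Nat.one_le_iff_ne_zero.mpr hloop)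

lemma rk_erase_eq_of_not_isColoop (hcoloop : ¬ M.IsColoop e) :
    M.rk (M.E.erase e) = M.rk M.E := by
  obtain ⟨B, hBE, -, hBrk, heB⟩ : ∃ B ⊆ M.E, M.rk B = B.card ∧ M.rk B = M.rk M.E ∧ e ∉ B := by
    simpa [IsColoop] using hcoloop
  refine le_antisymm (M.rk_mono (erase_subset e M.E)) ?_
  calc M.rk M.E = M.rk B := hBrk.symm
    _ ≤ M.rk (M.E.erase e) := M.rk_mono (subset_erase.mpr ⟨hBE, heB⟩)

section Term

variable {R : Type} [CommRing R] (x y r s : R) (t : α → R)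

def eqTutteTerm (S : Finset α) : R :=
  (x - 1) ^ (M.rk M.E - M.rk S) * (y - 1) ^ (S.card - M.rk S) *
    (∏ a ∈ S, (1 + r * t a)) * (∏ a ∈ M.E \ S, (1 + s * t a))

lemma eqTutte_eq_sum_eqTutteTerm :
    M.eqTutte x y r s t = ∑ S ∈ M.E.powerset, M.eqTutteTerm x y r s t S := rfl

lemma eqTutte_eq_sum_erase_add_sum_insert (he : e ∈ M.E) :
    M.eqTutte x y r s t =
      ∑ S ∈ (M.E.erase e).powerset, M.eqTutteTerm x y r s t S +
        ∑ S ∈ (M.E.erase e).powerset, M.eqTutteTerm x y r s t (insert e S) := by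
  have hpow : M.E.powerset = (insert e (M.E.erase e)).powerset := by rw [insert_erase he]
  rw [eqTutte_eq_sum_eqTutteTerm, hpow, sum_powerset_insert (notMem_erase e M.E)]

variable {M}

lemma eqTutteTerm_eq_mul_of_deletion {Mdel : FinMatroid α} (he : e ∈ M.E)
    (hcoloop : ¬ M.IsColoop e) (hdE : Mdel.E = M.E.erase e)
    (hdrk : ∀ S ⊆ M.E.erase e, Mdel.rk S = M.rk S) {S : Finset α} (hS : S ⊆ M.E.erase e) :
    M.eqTutteTerm x y r s t S = (1 + s * t e) * Mdel.eqTutteTerm x y r s t S := by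
  have heS : e ∈ M.E \ S := mem_sdiff.mpr ⟨he, fun h => notMem_erase e M.E (hS h)⟩
  have hrkE : Mdel.rk Mdel.E = M.rk M.E := by
    rw [hdE, hdrk _ subset_rfl, M.rk_erase_eq_of_not_isColoop hcoloop]
  rw [eqTutteTerm, eqTutteTerm, ← mul_prod_erase _ _ heS, ← erase_sdiff_comm, hdE.symm,
    hrkE, hdrk S hS]
  ring

lemma eqTutteTerm_insert_eq_mul_of_contraction {Mcon : FinMatroid α} (he : e ∈ M.E)
    (hloop : ¬ M.IsLoop e) (hcE : Mcon.E = M.E.erase e)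
    (hcrk : ∀ S ⊆ M.E.erase e, Mcon.rk S = M.rk (insert e S) - M.rk {e})
    {S : Finset α} (hS : S ⊆ M.E.erase e) :
    M.eqTutteTerm x y r s t (insert e S) = (1 + r * t e) * Mcon.eqTutteTerm x y r s t S := by
  have heS : e ∉ S := fun h => notMem_erase e M.E (hS h)
  have hrk_e : M.rk {e} = 1 := M.rk_singleton_eq_one_of_not_isLoop hloop
  have hrkS_pos : 1 ≤ M.rk (insert e S) :=
    hrk_e ▸ M.rk_mono (singleton_subset_iff.mpr (mem_insert_self e S))
  have hrkS_le : M.rk (insert e S) ≤ M.rk M.E :=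
    M.rk_mono (insert_subset he (hS.trans (erase_subset e M.E)))
  have hrkE : Mcon.rk Mcon.E = M.rk M.E - 1 := by
    rw [hcE, hcrk _ subset_rfl, insert_erase he, hrk_e]
  have hcorank : M.rk M.E - M.rk (insert e S) = Mcon.rk Mcon.E - Mcon.rk S := by
    rw [hrkE, hcrk S hS, hrk_e]; omega
  have hnullity : (insert e S).card - M.rk (insert e S) = S.card - Mcon.rk S := by
    rw [card_insert_of_notMem heS, hcrk S hS, hrk_e]; omega
  rw [eqTutteTerm, eqTutteTerm, hcorank, hnullity, prod_insert heS, sdiff_insert,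
    ← erase_sdiff_comm, hcE]
  ring

end Term

end FinMatroid

/-- Deletion–contraction for a general element ê (neither loop nor coloop):
T̂_M = (1 + s·t_ê)·T̂_{M∖ê} + (1 + r·t_ê)·T̂_{M/ê}. -/
theorem eqTutte_deletionContraction_general {α : Type} [DecidableEq α]
    (M Mdel Mcon : FinMatroid α) (e : α) (he : e ∈ M.E)
    (hloop : ¬ M.IsLoop e) (hcoloop : ¬ M.IsColoop e)
    (hdE : Mdel.E = M.E.erase e)
    (hdrk : ∀ S ⊆ M.E.erase e, Mdel.rk S = M.rk S)
    (hcE : Mcon.E = M.E.erase e)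
    (hcrk : ∀ S ⊆ M.E.erase e, Mcon.rk S = M.rk (insert e S) - M.rk {e})
    {R : Type} [CommRing R] (x y r s : R) (t : α → R) :
    M.eqTutte x y r s t =
      (1 + s * t e) * Mdel.eqTutte x y r s t + (1 + r * t e) * Mcon.eqTutte x y r s t := by
  rw [M.eqTutte_eq_sum_erase_add_sum_insert x y r s t he, Mdel.eqTutte_eq_sum_eqTutteTerm,
    Mcon.eqTutte_eq_sum_eqTutteTerm, hdE, hcE, mul_sum, mul_sum]
  congr 1 <;> refine sum_congr rfl fun S hS => ?_
  · exact FinMatroid.eqTutteTerm_eq_mul_of_deletion x y r s t he hcoloop hdE hdrk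
      (mem_powerset.mp hS)
  · exact FinMatroid.eqTutteTerm_insert_eq_mul_of_contraction x y r s t he hloop hcE hcrk
      (mem_powerset.mp hS)
end

section
/- Let M be a matroid on ground set E and ê ∈ E a loop. Then T̂_M = ((y-1)(1 + r·t_ê) + (1 + s·t_ê)) · T̂_{M∖ê}. -/
open Finset MvPolynomial

/-!
Split the subsets of `E = insert ê E'` into `S` and `insert ê S` with `S ⊆ E'`. Adding a loop
changes no rank, so `S` contributes its `M∖ê`-term times `1 + s·t_ê`, while `insert ê S` raises
the nullity by one and contributes that term times `(y - 1)(1 + r·t_ê)`.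
-/

namespace FinMatroid

variable {α : Type} [DecidableEq α]

theorem rk_insert_of_isLoop {M : FinMatroid α} {e : α} (hloop : M.IsLoop e) (S : Finset α) :
    M.rk (insert e S) = M.rk S := by
  have h := M.rk_submodular S {e}
  rw [union_singleton, hloop] at h
  exact le_antisymm (by omega) (M.rk_mono (subset_insert e S))

theorem card_sub_rk_insert_of_isLoop {M : FinMatroid α} {e : α} (hloop : M.IsLoop e)
    {S : Finset α} (heS : e ∉ S) :
    #(insert e S) - M.rk (insert e S) = #S - M.rk S + 1 := by
  rw [card_insert_of_notMem heS, rk_insert_of_isLoop hloop]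
  have := M.rk_le_card S
  omega

end FinMatroid

/-- For a loop ê:
T̂_M = ((y−1)(1 + r·t_ê) + (1 + s·t_ê))·T̂_{M∖ê}. -/
theorem eqTutte_loop {α : Type} [DecidableEq α]
    (M Mdel : FinMatroid α) (e : α) (he : e ∈ M.E) (hloop : M.IsLoop e)
    (hdE : Mdel.E = M.E.erase e)
    (hdrk : ∀ S ⊆ M.E.erase e, Mdel.rk S = M.rk S)
    {R : Type} [CommRing R] (x y r s : R) (t : α → R) :
    M.eqTutte x y r s t =
      ((y - 1) * (1 + r * t e) + (1 + s * t e)) * Mdel.eqTutte x y r s t := by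
  set E' := M.E.erase e
  have heE' : e ∉ E' := notMem_erase e M.E
  have hE : M.E = insert e E' := (insert_erase he).symm
  rw [FinMatroid.eqTutte, FinMatroid.eqTutte, hdE, hE, sum_powerset_insert heE',
    ← sum_add_distrib, mul_sum]
  refine sum_congr rfl fun S hS => ?_
  have hSE' : S ⊆ E' := mem_powerset.mp hS
  have heS : e ∉ S := fun h => heE' (hSE' h)
  rw [insert_sdiff_of_notMem _ heS, insert_sdiff_insert, sdiff_insert_of_notMem heE',
    prod_insert heS, prod_insert (fun h => heE' (mem_sdiff.mp h).1),
    FinMatroid.card_sub_rk_insert_of_isLoop hloop heS, FinMatroid.rk_insert_of_isLoop hloop,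
    FinMatroid.rk_insert_of_isLoop hloop, hdrk S hSE', hdrk E' subset_rfl]
  ring
end

section
/- Let M be a matroid on ground set E consisting only of loops and coloops, with L ⊆ E its set of loops. Then T̂_M(x,y,r,s) = ∏_{e∈L}(y + (yr − r + s)·t_e) · ∏_{e∉L}(x + (xs − s + r)·t_e). -/
open Finset MvPolynomial

/-! Every basis of `E` contains the coloops, and no independent set meets the loops, so
`rk S = #(S \ L)` for every `S ⊆ E`. With this rank function each summand of `eqTutte` is a product
over `E` of one factor per element, which depends only on whether the element lies in `S` and in `L`;
the sum over `S ⊆ E` is then the expansion of a product over `E` of binomials. -/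

theorem Finset.prod_ite_mem_eq_pow_mul_pow {α M : Type*} [DecidableEq α] [CommMonoid M]
    (S L : Finset α) (a b : M) :
    ∏ e ∈ S, (if e ∈ L then a else b) = a ^ #(S ∩ L) * b ^ #(S \ L) := by
  rw [prod_ite, prod_const, prod_const, filter_mem_eq_inter, filter_notMem_eq_sdiff]

namespace FinMatroid

variable {α : Type} [DecidableEq α] (M : FinMatroid α)

theorem rk_union_le (S T : Finset α) : M.rk (S ∪ T) ≤ M.rk S + M.rk T := by
  have := M.rk_submodular S T
  omega

theorem rk_insert_le (a : α) (S : Finset α) : M.rk (insert a S) ≤ M.rk S + 1 := by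
  have h := M.rk_union_le {a} S
  have ha : M.rk {a} ≤ 1 := by simpa using M.rk_le_card {a}
  rw [← insert_eq] at h
  omega

theorem rk_eq_zero_of_forall_isLoop {S : Finset α} (hS : ∀ e ∈ S, M.IsLoop e) : M.rk S = 0 := by
  induction S using Finset.induction_on with
  | empty => exact M.rk_empty
  | insert a S _ ih =>
    have ha : M.rk {a} = 0 := hS a (mem_insert_self a S)
    have hS' : M.rk S = 0 := ih fun e he => hS e (mem_insert_of_mem he)
    have h := M.rk_union_le {a} S
    rw [← insert_eq] at h
    omega

theorem rk_eq_card_of_subset {A B : Finset α} (hB : M.rk B = #B) (hAB : A ⊆ B) :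
    M.rk A = #A := by
  have hsplit := M.rk_union_le A (B \ A)
  rw [union_sdiff_of_subset hAB] at hsplit
  have hcard := card_sdiff_add_card_eq_card hAB
  have := M.rk_le_card A
  have := M.rk_le_card (B \ A)
  omega

theorem exists_basis (T : Finset α) : ∃ B ⊆ T, M.rk B = #B ∧ M.rk B = M.rk T := by
  induction T using Finset.induction_on with
  | empty => exact ⟨∅, empty_subset _, by simp [M.rk_empty], rfl⟩
  | @insert a S haS ih =>
    obtain ⟨B, hBS, hBind, hBrk⟩ := ih
    have hmono := M.rk_mono (subset_insert a S)
    by_cases hspan : M.rk (insert a S) = M.rk S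
    · exact ⟨B, hBS.trans (subset_insert a S), hBind, hBrk.trans hspan.symm⟩
    · have haB : a ∉ B := fun h => haS (hBS h)
      -- submodularity for `insert a B` and `S`, whose union is `insert a S` and intersection `B`
      have hsub := M.rk_submodular (insert a B) S
      rw [insert_union, union_eq_right.mpr hBS, insert_inter_of_notMem haS,
        inter_eq_left.mpr hBS] at hsub
      have hle := M.rk_le_card (insert a B)
      have hup := M.rk_insert_le a S
      rw [card_insert_of_notMem haB] at hle
      refine ⟨insert a B, insert_subset_insert a hBS, ?_, by omega⟩
      rw [card_insert_of_notMem haB]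
      omega

theorem rk_eq_card_sdiff_of_loops_coloops {L : Finset α} (hloops : ∀ e ∈ L, M.IsLoop e)
    (hcoloops : ∀ e ∈ M.E \ L, M.IsColoop e) {S : Finset α} (hS : S ⊆ M.E) :
    M.rk S = #(S \ L) := by
  obtain ⟨B, hBE, hBind, hBrk⟩ := M.exists_basis M.E
  have hSB : S \ L ⊆ B := fun e he =>
    hcoloops e (sdiff_subset_sdiff hS subset_rfl he) B hBE hBind hBrk
  have hindep := M.rk_eq_card_of_subset hBind hSB
  have hsplit := M.rk_union_le (S \ L) (S ∩ L)
  rw [sdiff_union_inter] at hsplit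
  have hloopsS : M.rk (S ∩ L) = 0 :=
    M.rk_eq_zero_of_forall_isLoop fun e he => hloops e (mem_inter.mp he).2
  have hmono := M.rk_mono (sdiff_subset : S \ L ⊆ S)
  omega

theorem eqTutte_eq_prod_of_rk_eq_card_sdiff {L : Finset α} (hL : L ⊆ M.E)
    (hrk : ∀ S ⊆ M.E, M.rk S = #(S \ L)) {R : Type} [CommRing R] (x y r s : R)
    (t : α → R) :
    M.eqTutte x y r s t =
      (∏ e ∈ L, (y + (y * r - r + s) * t e)) *
        ∏ e ∈ M.E \ L, (x + (x * s - s + r) * t e) := by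
  set F : α → R := fun e => (if e ∈ L then y - 1 else 1) * (1 + r * t e)
  set G : α → R := fun e => (if e ∈ L then 1 else x - 1) * (1 + s * t e)
  have hsummand : ∀ S ⊆ M.E,
      (x - 1) ^ (M.rk M.E - M.rk S) * (y - 1) ^ (#S - M.rk S) *
        (∏ e ∈ S, (1 + r * t e)) * (∏ e ∈ M.E \ S, (1 + s * t e)) =
      (∏ e ∈ S, F e) * ∏ e ∈ M.E \ S, G e := by
    intro S hS
    have hy : #S - M.rk S = #(S ∩ L) := by
      have := card_sdiff_add_card_inter S L
      rw [hrk S hS]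
      omega
    have hx : M.rk M.E - M.rk S = #((M.E \ S) \ L) := by
      have hset : (M.E \ L) \ (S \ L) = (M.E \ S) \ L := by
        ext e
        simp only [mem_sdiff]
        tauto
      rw [hrk M.E subset_rfl, hrk S hS, ← card_sdiff_of_subset (sdiff_subset_sdiff hS subset_rfl),
        hset]
    simp only [F, G, prod_mul_distrib, Finset.prod_ite_mem_eq_pow_mul_pow, one_pow, hx, hy]
    ring
  calc M.eqTutte x y r s t = ∑ S ∈ M.E.powerset, (∏ e ∈ S, F e) * ∏ e ∈ M.E \ S, G e :=
        sum_congr rfl fun S hS => hsummand S (mem_powerset.mp hS)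
    _ = ∏ e ∈ M.E, (F e + G e) := (prod_add F G M.E).symm
    _ = _ := by
      rw [← prod_sdiff hL, mul_comm]
      congr 1 <;> refine prod_congr rfl fun e he => ?_
      · simp only [F, G, if_pos he]
        ring
      · simp only [F, G, if_neg (mem_sdiff.mp he).2]
        ring

end FinMatroid

/-- If every element of M is a loop or a coloop, and L is the set of loops,
then T̂_M = ∏_{e∈L}(y + (yr−r+s)t_e) · ∏_{e∉L}(x + (xs−s+r)t_e). -/
theorem eqTutte_loops_coloops {α : Type} [DecidableEq α]
    (M : FinMatroid α) (L : Finset α) (hL : L ⊆ M.E)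
    (hloops : ∀ e ∈ L, M.IsLoop e)
    (hcoloops : ∀ e ∈ M.E \ L, M.IsColoop e)
    {R : Type} [CommRing R] (x y r s : R) (t : α → R) :
    M.eqTutte x y r s t =
      (∏ e ∈ L, (y + (y * r - r + s) * t e)) *
        ∏ e ∈ M.E \ L, (x + (x * s - s + r) * t e) :=
  M.eqTutte_eq_prod_of_rk_eq_card_sdiff hL
    (fun _ hS => M.rk_eq_card_sdiff_of_loops_coloops hloops hcoloops hS) x y r s t
end

section
/- Let M = U_{n,n+1} be the uniform matroid of rank n on a ground set E of size n+1. Then T̂_M(x,y,r,s) = (1/(x-1))·(∏_{e∈E}(x + (xs−s+r)·t_e) − ∏_{e∈E}(1+r·t_e)) + (y−1)·∏_{e∈E}(1+r·t_e), interpreted as the polynomial identity (x−1)·T̂_M = ∏_{e∈E}(x + (xs−s+r)·t_e) − ∏_{e∈E}(1+r·t_e) + (x−1)(y−1)·∏_{e∈E}(1+r·t_e). -/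
open Finset MvPolynomial

/-!
Write `x + (xs - s + r)tₑ = (1 + r tₑ) + (x - 1)(1 + s tₑ)` and expand the product over `E` as a
sum over subsets `S ⊆ E`: the `S`-term is `(x - 1)^|E \ S| ∏_S (1 + r t) ∏_{E \ S} (1 + s t)`.
In `U_{n,n+1}` every proper subset `S` is independent and the ground set has rank `n = |E| - 1`,
so `(x - 1)` times the `S`-term of `T̂_M` is exactly this term. Only `S = E` differs: there the
expansion contributes `∏_E (1 + r t)`, while `T̂_M` has nullity one and contributes
`(y - 1) ∏_E (1 + r t)`.
-/

theorem Finset.prod_add_mul_eq_sum_powerset {ι R : Type*} [CommSemiring R] [DecidableEq ι]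
    (E : Finset ι) (c : R) (f g : ι → R) :
    ∏ e ∈ E, (f e + c * g e) =
      ∑ S ∈ E.powerset, c ^ (E \ S).card * (∏ e ∈ S, f e) * ∏ e ∈ E \ S, g e := by
  rw [prod_add]
  refine sum_congr rfl fun S _ => ?_
  rw [prod_mul_distrib, prod_const]
  ring

theorem Finset.sum_powerset_eq_add_sum_ssubsets {ι M : Type*} [AddCommMonoid M] [DecidableEq ι]
    (E : Finset ι) (f : Finset ι → M) :
    ∑ S ∈ E.powerset, f S = f E + ∑ S ∈ E.ssubsets, f S :=
  (add_sum_erase _ f (mem_powerset_self E)).symm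

namespace FinMatroid

section UniformCorankOne

variable {α : Type} [DecidableEq α] {M : FinMatroid α} {n : ℕ}
  (hcard : M.E.card = n + 1) (hrk : ∀ S ⊆ M.E, M.rk S = min S.card n)
include hcard hrk

theorem rk_ground_of_uniform_corank_one : M.rk M.E = n := by
  rw [hrk M.E Subset.rfl, hcard]
  exact min_eq_right n.le_succ

theorem rk_eq_card_of_ssubset_of_uniform_corank_one {S : Finset α} (hS : S ⊂ M.E) :
    M.rk S = S.card := by
  have hlt : S.card < n + 1 := hcard ▸ card_lt_card hS
  rw [hrk S hS.subset]
  exact min_eq_left (Nat.le_of_lt_succ hlt)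

theorem sub_one_mul_eqTutte_term_of_ssubset {R : Type} [CommRing R] (x y r s : R) (t : α → R)
    {S : Finset α} (hS : S ⊂ M.E) :
    (x - 1) * ((x - 1) ^ (M.rk M.E - M.rk S) * (y - 1) ^ (S.card - M.rk S) *
        (∏ e ∈ S, (1 + r * t e)) * ∏ e ∈ M.E \ S, (1 + s * t e)) =
      (x - 1) ^ (M.E \ S).card * (∏ e ∈ S, (1 + r * t e)) * ∏ e ∈ M.E \ S, (1 + s * t e) := by
  have hlt : S.card < n + 1 := hcard ▸ card_lt_card hS
  have hexp : (M.E \ S).card = n - S.card + 1 := by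
    rw [card_sdiff_of_subset hS.subset, hcard]
    omega
  rw [rk_eq_card_of_ssubset_of_uniform_corank_one hcard hrk hS,
    rk_ground_of_uniform_corank_one hcard hrk, hexp, Nat.sub_self, pow_zero, pow_succ]
  ring

theorem eqTutte_term_ground {R : Type} [CommRing R] (x y r s : R) (t : α → R) :
    (x - 1) ^ (M.rk M.E - M.rk M.E) * (y - 1) ^ (M.E.card - M.rk M.E) *
        (∏ e ∈ M.E, (1 + r * t e)) * ∏ e ∈ M.E \ M.E, (1 + s * t e) =
      (y - 1) * ∏ e ∈ M.E, (1 + r * t e) := by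
  rw [rk_ground_of_uniform_corank_one hcard hrk, hcard, Nat.sub_self, Nat.add_sub_cancel_left,
    Finset.sdiff_self, prod_empty, pow_zero, pow_one, one_mul, mul_one]

end UniformCorankOne

end FinMatroid

/-- For the uniform matroid U_{n,n+1} (ground set of size n+1, rank
function S ↦ min(|S|, n)):
(x−1)·T̂_M = ∏_{e∈E}(x + (xs−s+r)t_e) − ∏_{e∈E}(1+r·t_e) + (x−1)(y−1)·∏_{e∈E}(1+r·t_e). -/
theorem eqTutte_uniform_corank_one {α : Type} [DecidableEq α]
    (M : FinMatroid α) (n : ℕ) (hcard : M.E.card = n + 1)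
    (hrk : ∀ S ⊆ M.E, M.rk S = min S.card n)
    {R : Type} [CommRing R] (x y r s : R) (t : α → R) :
    (x - 1) * M.eqTutte x y r s t =
      (∏ e ∈ M.E, (x + (x * s - s + r) * t e)) - (∏ e ∈ M.E, (1 + r * t e))
        + (x - 1) * (y - 1) * ∏ e ∈ M.E, (1 + r * t e) := by
  have hexpand : ∏ e ∈ M.E, (x + (x * s - s + r) * t e) =
      ∏ e ∈ M.E, ((1 + r * t e) + (x - 1) * (1 + s * t e)) :=
    prod_congr rfl fun e _ => by ring
  rw [hexpand, prod_add_mul_eq_sum_powerset, sum_powerset_eq_add_sum_ssubsets,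
    FinMatroid.eqTutte, sum_powerset_eq_add_sum_ssubsets, mul_add, mul_sum,
    FinMatroid.eqTutte_term_ground hcard hrk,
    sum_congr rfl fun S hS => FinMatroid.sub_one_mul_eqTutte_term_of_ssubset hcard hrk
      x y r s t (mem_ssubsets.mp hS),
    Finset.sdiff_self, card_empty, pow_zero, prod_empty]
  ring
end

section
/- Let M be a matroid on ground set E and A ⊆ E. The coefficient of the monomial t_A = ∏_{e∈A} t_e in T̂_M(x,y,1,0) equals (y−1)^{nl_M(A)} · T_{M/A}(x,y), where nl_M(A) = |A| − rk_M(A) and T_{M/A} is the classical Tutte polynomial of the contraction M/A. -/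
open Finset MvPolynomial

/-!
At `(r, s) = (1, 0)` the summand of `S` carries the factor `∏ e ∈ S, (1 + t e)`, whose
coefficient of `t_A` is `1` if `A ⊆ S` and `0` otherwise. The coefficient of `t_A` is therefore
the Tutte sum restricted to the supersets `S = U ∪ A` of `A`, `U ⊆ E \ A`. Since the rank of
`M / A` is `rk (U ∪ A) - rk A`, the corank of `U ∪ A` in `M` is the corank of `U` in `M / A`,
and its nullity is the nullity of `A` plus the nullity of `U` in `M / A`.
-/

section

variable {α : Type} [DecidableEq α]

theorem Finset.sum_filter_superset_powerset {M : Type} [AddCommMonoid M] {A E : Finset α}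
    (hA : A ⊆ E) (f : Finset α → M) :
    ∑ S ∈ E.powerset with A ⊆ S, f S = ∑ U ∈ (E \ A).powerset, f (U ∪ A) := by
  refine sum_bij' (fun S _ => S \ A) (fun U _ => U ∪ A) ?_ ?_ ?_ ?_ ?_ <;>
    simp only [mem_filter, mem_powerset]
  · exact fun S hS => sdiff_subset_sdiff hS.1 le_rfl
  · exact fun U hU => ⟨union_subset (hU.trans sdiff_subset) hA, subset_union_right⟩
  · exact fun S hS => sdiff_union_of_subset hS.2
  · exact fun U hU => union_sdiff_cancel_right (disjoint_of_subset_left hU sdiff_disjoint)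
  · exact fun S hS => by rw [sdiff_union_of_subset hS.2]

theorem support_sum_single_one (s : Finset α) :
    (∑ i ∈ s, Finsupp.single i (1 : ℕ)).support = s := by
  rw [Finsupp.support_sum_eq_biUnion _ (by simp)]
  simp

theorem coeff_sum_single_one_prod_one_add_X {R : Type} [CommSemiring R] (A S : Finset α) :
    coeff (∑ e ∈ A, Finsupp.single e 1) (∏ e ∈ S, (1 + X e) : MvPolynomial α R) =
      if A ⊆ S then 1 else 0 := by
  have hsupp : ∀ T : Finset α,
      (∑ e ∈ T, Finsupp.single e 1 = ∑ e ∈ A, Finsupp.single e 1) ↔ T = A :=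
    fun T => ⟨fun h => by simpa only [support_sum_single_one] using congrArg Finsupp.support h,
      fun h => h ▸ rfl⟩
  simp_rw [prod_one_add, coeff_sum, X, ← monomial_sum_one, coeff_monomial, hsupp,
    sum_ite_eq', mem_powerset]

namespace FinMatroid

theorem rk_union_le_card_add_rk (M : FinMatroid α) (U A : Finset α) :
    M.rk (U ∪ A) ≤ U.card + M.rk A := by
  have := M.rk_submodular U A
  have := M.rk_le_card U
  omega

section Contraction

variable {M Mcon : FinMatroid α} {A : Finset α}

theorem nullity_union_eq_add_nullity_contract
    (hcrk : ∀ S ⊆ M.E \ A, Mcon.rk S = M.rk (S ∪ A) - M.rk A) {U : Finset α}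
    (hU : U ⊆ M.E \ A) :
    (U ∪ A).card - M.rk (U ∪ A) = (A.card - M.rk A) + (U.card - Mcon.rk U) := by
  rw [hcrk U hU, card_union_of_disjoint (disjoint_of_subset_left hU sdiff_disjoint)]
  have := M.rk_le_card A
  have := M.rk_mono (subset_union_right : A ⊆ U ∪ A)
  have := M.rk_union_le_card_add_rk U A
  omega

theorem corank_contract_eq_corank_union (hA : A ⊆ M.E)
    (hcrk : ∀ S ⊆ M.E \ A, Mcon.rk S = M.rk (S ∪ A) - M.rk A) {U : Finset α}
    (hU : U ⊆ M.E \ A) :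
    Mcon.rk (M.E \ A) - Mcon.rk U = M.rk M.E - M.rk (U ∪ A) := by
  rw [hcrk _ subset_rfl, hcrk U hU, sdiff_union_of_subset hA]
  have := M.rk_mono (subset_union_right : A ⊆ U ∪ A)
  have := M.rk_mono (union_subset (hU.trans sdiff_subset) hA)
  omega

theorem pow_nullity_mul_tutte_contract {R : Type} [CommRing R] (hA : A ⊆ M.E)
    (hcE : Mcon.E = M.E \ A)
    (hcrk : ∀ S ⊆ M.E \ A, Mcon.rk S = M.rk (S ∪ A) - M.rk A) (x y : R) :
    (y - 1) ^ (A.card - M.rk A) * Mcon.tutte x y =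
      ∑ S ∈ M.E.powerset with A ⊆ S,
        (x - 1) ^ (M.rk M.E - M.rk S) * (y - 1) ^ (S.card - M.rk S) := by
  rw [sum_filter_superset_powerset hA, tutte, hcE, mul_sum]
  refine sum_congr rfl fun U hU => ?_
  rw [mem_powerset] at hU
  rw [corank_contract_eq_corank_union hA hcrk hU, nullity_union_eq_add_nullity_contract hcrk hU,
    pow_add]
  ring

end Contraction

theorem coeff_eqTutte_one_zero {R : Type} [CommRing R] (M : FinMatroid α) (A : Finset α)
    (x y : R) :
    coeff (∑ e ∈ A, Finsupp.single e 1) (M.eqTutte (C x) (C y) 1 0 X) =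
      ∑ S ∈ M.E.powerset with A ⊆ S,
        (x - 1) ^ (M.rk M.E - M.rk S) * (y - 1) ^ (S.card - M.rk S) := by
  have hC : ∀ a : R, (C a - 1 : MvPolynomial α R) = C (a - 1) := fun a => by rw [map_sub, C_1]
  simp only [eqTutte, zero_mul, add_zero, prod_const_one, mul_one, one_mul, hC, ← map_pow,
    ← map_mul, coeff_sum, coeff_C_mul, coeff_sum_single_one_prod_one_add_X, mul_ite, mul_zero,
    sum_filter]

end FinMatroid

end

/-- The coefficient of t_A in T̂_M(x,y,1,0) is
(y−1)^{nl_M(A)}·T_{M/A}(x,y). -/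
theorem coeff_eqTutte_r_one_s_zero {α : Type} [DecidableEq α]
    (M Mcon : FinMatroid α) (A : Finset α) (hA : A ⊆ M.E)
    (hcE : Mcon.E = M.E \ A)
    (hcrk : ∀ S ⊆ M.E \ A, Mcon.rk S = M.rk (S ∪ A) - M.rk A) :
    MvPolynomial.coeff (∑ e ∈ A, Finsupp.single e 1)
        (M.eqTutte (R := MvPolynomial α (MvPolynomial (Fin 2) ℤ))
          (MvPolynomial.C (MvPolynomial.X 0)) (MvPolynomial.C (MvPolynomial.X 1))
          1 0 MvPolynomial.X)
      = (MvPolynomial.X 1 - 1) ^ (A.card - M.rk A) *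
          Mcon.tutte (MvPolynomial.X 0) (MvPolynomial.X 1) := by
  rw [M.coeff_eqTutte_one_zero, FinMatroid.pow_nullity_mul_tutte_contract hA hcE hcrk]
end

section
/- Let M be a matroid on ground set E and A ⊆ E. The coefficient of the monomial t_A = ∏_{e∈A} t_e in T̂_M(x,y,0,1) equals (x−1)^{rk(M) − rk_M(E∖A)} · T_{M∖A}(x,y), where T_{M∖A} is the classical Tutte polynomial of the deletion M∖A. -/
open Finset MvPolynomial

/-! At `r = 0`, `s = 1` the summand of `S` is `(x-1)^(rk E - rk S) (y-1)^(|S| - rk S) ∏_{e ∈ E∖S} (1 + t_e)`,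
and the coefficient of `t_A` in `∏_{e ∈ E∖S} (1 + t_e)` is `1` exactly when `A ⊆ E ∖ S`, i.e. when
`S ⊆ E ∖ A`. The surviving sum runs over the subsets of `E ∖ A`, and splitting the exponent
`rk E - rk S = (rk E - rk (E∖A)) + (rk (E∖A) - rk S)` (monotonicity of `rk`) turns it into the
prefactor times the Tutte polynomial of `M ∖ A`. -/

lemma Finset.subset_sdiff_comm {α : Type} [DecidableEq α] {A S E : Finset α} (hA : A ⊆ E)
    (hS : S ⊆ E) : A ⊆ E \ S ↔ S ⊆ E \ A := by
  simp only [Finset.subset_sdiff, hA, hS, true_and, disjoint_comm]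

lemma Finset.sum_single_one_eq_toFinsupp {α : Type} [DecidableEq α] (U : Finset α) :
    ∑ e ∈ U, Finsupp.single e 1 = Multiset.toFinsupp U.val := by
  simp only [← U.sum_multiset_singleton, map_sum, Multiset.toFinsupp_singleton]

lemma Finset.sum_single_one_injective {α : Type} [DecidableEq α] :
    Function.Injective fun U : Finset α => ∑ e ∈ U, Finsupp.single e 1 := by
  intro U V h
  simp only [Finset.sum_single_one_eq_toFinsupp] at h
  exact Finset.val_injective (Multiset.toFinsupp.injective h)

namespace MvPolynomial

lemma prod_X_eq_monomial {σ R : Type} [CommSemiring R] (U : Finset σ) :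
    ∏ e ∈ U, (X e : MvPolynomial σ R) = monomial (∑ e ∈ U, Finsupp.single e 1) 1 :=
  (monomial_sum_one U _).symm

lemma coeff_prod_one_add_X {σ R : Type} [DecidableEq σ] [CommSemiring R] (A T : Finset σ) :
    coeff (∑ e ∈ A, Finsupp.single e 1) (∏ e ∈ T, (1 + X e : MvPolynomial σ R)) =
      if A ⊆ T then 1 else 0 := by
  simp only [prod_one_add, coeff_sum, prod_X_eq_monomial, coeff_monomial,
    Finset.sum_single_one_injective.eq_iff, Finset.sum_ite_eq', Finset.mem_powerset]

end MvPolynomial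

namespace FinMatroid

variable {α : Type} [DecidableEq α]

lemma coeff_eqTutte_zero_one {K : Type} [CommRing K] (M : FinMatroid α) {A : Finset α}
    (hA : A ⊆ M.E) (x y : K) :
    coeff (∑ e ∈ A, Finsupp.single e 1) (M.eqTutte (C x) (C y) 0 1 X) =
      ∑ S ∈ (M.E \ A).powerset, (x - 1) ^ (M.rk M.E - M.rk S) * (y - 1) ^ (S.card - M.rk S) := by
  have hfilter : {S ∈ M.E.powerset | S ⊆ M.E \ A} = (M.E \ A).powerset := by
    ext S
    simp only [mem_filter, mem_powerset, and_iff_right_iff_imp]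
    exact fun h => h.trans sdiff_subset
  rw [← hfilter, sum_filter, eqTutte, coeff_sum]
  refine sum_congr rfl fun S hS => ?_
  simp only [zero_mul, add_zero, prod_const_one, mul_one, one_mul]
  rw [← map_one C, ← map_sub, ← map_sub, ← map_pow, ← map_pow, ← map_mul, coeff_C_mul, map_one,
    coeff_prod_one_add_X]
  simp only [subset_sdiff_comm hA (mem_powerset.mp hS), mul_ite, mul_one, mul_zero]

lemma pow_mul_tutte_of_deletion {R : Type} [CommRing R] {M N : FinMatroid α} {A : Finset α}
    (hE : N.E = M.E \ A) (hrk : ∀ S ⊆ M.E \ A, N.rk S = M.rk S) (x y : R) :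
    (x - 1) ^ (M.rk M.E - M.rk (M.E \ A)) * N.tutte x y =
      ∑ S ∈ (M.E \ A).powerset, (x - 1) ^ (M.rk M.E - M.rk S) * (y - 1) ^ (S.card - M.rk S) := by
  rw [tutte, hE, mul_sum]
  refine sum_congr rfl fun S hS => ?_
  have hSA : S ⊆ M.E \ A := mem_powerset.mp hS
  rw [hrk S hSA, hrk _ subset_rfl, ← mul_assoc, ← pow_add,
    tsub_add_tsub_cancel (M.rk_mono sdiff_subset) (M.rk_mono hSA)]

end FinMatroid

/-- The coefficient of t_A in T̂_M(x,y,0,1) is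
(x−1)^{rk(M)−rk_M(E∖A)}·T_{M∖A}(x,y). -/
theorem coeff_eqTutte_r_zero_s_one {α : Type} [DecidableEq α]
    (M Mdel : FinMatroid α) (A : Finset α) (hA : A ⊆ M.E)
    (hdE : Mdel.E = M.E \ A)
    (hdrk : ∀ S ⊆ M.E \ A, Mdel.rk S = M.rk S) :
    MvPolynomial.coeff (∑ e ∈ A, Finsupp.single e 1)
        (M.eqTutte (R := MvPolynomial α (MvPolynomial (Fin 2) ℤ))
          (MvPolynomial.C (MvPolynomial.X 0)) (MvPolynomial.C (MvPolynomial.X 1))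
          0 1 MvPolynomial.X)
      = (MvPolynomial.X 0 - 1) ^ (M.rk M.E - M.rk (M.E \ A)) *
          Mdel.tutte (MvPolynomial.X 0) (MvPolynomial.X 1) := by
  rw [M.coeff_eqTutte_zero_one hA, FinMatroid.pow_mul_tutte_of_deletion hdE hdrk]
end

section
/- Define the equivariant reduced characteristic polynomial of a matroid M on ground set E as the element χ̂_M(q) of ℤ[t_e : e∈E][q] satisfying (q−1)·χ̂_M(q) = Σ_{S⊆E} q^{rk(M)−rk_M(S)} (−1)^{|S|} ∏_{e∉S}(1+t_e) ∏_{e∈S}(1+q·t_e). Then for A ⊆ E, substituting t_e = −1 for e ∈ A and t_e = 0 for e ∉ A in χ̂_M(q) gives (1−q)^{|A|}(−1)^{|A|}·χ_{M/A}(q), where χ_N(q) = (−1)^{rk(N)} T_N(1−q,0)/(q−1) is the classical reduced characteristic polynomial. -/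
open Finset MvPolynomial

/-!
Under the substitution the factor `1 + t_e` vanishes for `e ∈ A`, so only the sets `S ⊇ A`
survive, each with the factor `(1 - q) ^ |A|` coming from `∏_{e ∈ A} (1 + q t_e)`. Writing
`S = T ∪ A` with `T ⊆ E \ A` turns `rk M - rk_M S` into `rk (M/A) - rk_{M/A} T`, and the
remaining sum is Whitney's expansion
`(-1) ^ rk N * T_N(1 - q, 0) = ∑_{T ⊆ E} q ^ (rk N - rk_N T) (-1) ^ |T|` for `N = M/A`.
-/

namespace FinMatroid

variable {α : Type} [DecidableEq α]

theorem neg_one_pow_rk_mul_tutte_one_sub_zero (N : FinMatroid α) {R : Type} [CommRing R]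
    (q : R) :
    (-1) ^ N.rk N.E * N.tutte (1 - q) 0 =
      ∑ T ∈ N.E.powerset, q ^ (N.rk N.E - N.rk T) * (-1) ^ T.card := by
  rw [tutte, mul_sum]
  refine sum_congr rfl fun T hT => ?_
  obtain ⟨a, ha⟩ := Nat.exists_eq_add_of_le (N.rk_mono (mem_powerset.1 hT))
  obtain ⟨b, hb⟩ := Nat.exists_eq_add_of_le (N.rk_le_card T)
  have hsq : (-1 : R) ^ a * (-1) ^ a = 1 := by rw [← mul_pow, neg_one_mul, neg_neg, one_pow]
  rw [ha, hb, Nat.add_sub_cancel_left, Nat.add_sub_cancel_left, sub_sub_cancel_left,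
    zero_sub, neg_pow, pow_add, pow_add]
  linear_combination (-1) ^ N.rk T * (-1) ^ b * q ^ a * hsq

theorem rk_sdiff_sub_rk_of_contract {M Mcon : FinMatroid α} {A : Finset α} (hA : A ⊆ M.E)
    (hcrk : ∀ S ⊆ M.E \ A, Mcon.rk S = M.rk (S ∪ A) - M.rk A) {T : Finset α}
    (hT : T ⊆ M.E \ A) :
    Mcon.rk (M.E \ A) - Mcon.rk T = M.rk M.E - M.rk (T ∪ A) := by
  have hTA : T ∪ A ⊆ M.E := union_subset (hT.trans sdiff_subset) hA
  rw [hcrk _ subset_rfl, hcrk T hT, sdiff_union_of_subset hA]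
  have hA_le : M.rk A ≤ M.rk (T ∪ A) := M.rk_mono subset_union_right
  have hTA_le : M.rk (T ∪ A) ≤ M.rk M.E := M.rk_mono hTA
  omega

end FinMatroid

section Substitution

variable {α R : Type} [DecidableEq α] [CommRing R]

theorem prod_one_add_ite_mem_neg_one (s A : Finset α) :
    ∏ e ∈ s, (1 + if e ∈ A then (-1 : R) else 0) = if Disjoint s A then 1 else 0 := by
  have hfactor : ∀ e, (1 + if e ∈ A then (-1 : R) else 0) = if e ∉ A then 1 else 0 :=
    fun e => by split_ifs <;> simp_all
  simp only [hfactor, prod_boole, disjoint_left]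

theorem prod_one_add_mul_ite_mem_neg_one (c : R) (s A : Finset α) :
    ∏ e ∈ s, (1 + c * if e ∈ A then (-1 : R) else 0) = (1 - c) ^ (s ∩ A).card := by
  have hfactor : ∀ e, (1 + c * if e ∈ A then (-1 : R) else 0) = if e ∈ A then 1 - c else 1 :=
    fun e => by split_ifs <;> ring
  simp only [hfactor, prod_ite_mem, prod_const]

theorem sum_powerset_filter_superset (E A : Finset α) (hA : A ⊆ E) (f : Finset α → R) :
    ∑ S ∈ E.powerset with A ⊆ S, f S = ∑ T ∈ (E \ A).powerset, f (T ∪ A) := by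
  symm
  refine sum_nbij' (· ∪ A) (· \ A) (fun T hT => ?_) (fun S hS => ?_) (fun T hT => ?_)
    (fun S hS => ?_) (fun _ _ => rfl)
  · simp only [mem_powerset, mem_filter] at hT ⊢
    exact ⟨union_subset (hT.trans sdiff_subset) hA, subset_union_right⟩
  · simp only [mem_powerset, mem_filter] at hS ⊢
    exact sdiff_subset_sdiff hS.1 subset_rfl
  · simp only [mem_powerset] at hT
    exact union_sdiff_cancel_right (disjoint_of_subset_left hT sdiff_disjoint)
  · simp only [mem_filter] at hS
    exact sdiff_union_of_subset hS.2

theorem sum_powerset_substitute {E A : Finset α} (hA : A ⊆ E) (w : Finset α → R) (c : R) :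
    ∑ S ∈ E.powerset, w S * (∏ e ∈ E \ S, (1 + if e ∈ A then (-1 : R) else 0)) *
        (∏ e ∈ S, (1 + c * if e ∈ A then (-1 : R) else 0)) =
      (1 - c) ^ A.card * ∑ T ∈ (E \ A).powerset, w (T ∪ A) := by
  have hdisj : ∀ S, Disjoint (E \ S) A ↔ A ⊆ S := fun S => by
    simp only [disjoint_right, mem_sdiff, not_and_not_right]
    exact ⟨fun h a ha => h ha (hA ha), fun h a ha _ => h ha⟩
  calc _ = ∑ S ∈ E.powerset with A ⊆ S, (1 - c) ^ A.card * w S := by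
        rw [sum_filter]
        refine sum_congr rfl fun S _ => ?_
        rw [prod_one_add_ite_mem_neg_one, prod_one_add_mul_ite_mem_neg_one]
        by_cases hAS : A ⊆ S
        · rw [if_pos ((hdisj S).2 hAS), if_pos hAS, inter_eq_right.2 hAS]
          ring
        · rw [if_neg (mt (hdisj S).1 hAS), if_neg hAS]
          ring
    _ = _ := by rw [sum_powerset_filter_superset E A hA, mul_sum]

end Substitution

/-- Substituting t_e = −1 for e ∈ A and t_e = 0 for e ∉ A in the
equivariant reduced characteristic polynomial χ̂_M(q) gives
(1−q)^{|A|}(−1)^{|A|}·χ_{M/A}(q); stated after multiplying both sides by (q−1),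
using (q−1)·χ̂_M(q) = Σ_{S⊆E} q^{rk(M)−rk_M(S)}(−1)^{|S|}∏_{e∉S}(1+t_e)∏_{e∈S}(1+q·t_e)
and (q−1)·χ_N(q) = (−1)^{rk(N)}·T_N(1−q,0). -/
theorem eqCharPoly_substitute {α : Type} [DecidableEq α]
    (M Mcon : FinMatroid α) (A : Finset α) (hA : A ⊆ M.E)
    (hcE : Mcon.E = M.E \ A)
    (hcrk : ∀ S ⊆ M.E \ A, Mcon.rk S = M.rk (S ∪ A) - M.rk A) :
    (∑ S ∈ M.E.powerset,
        (Polynomial.X : Polynomial ℤ) ^ (M.rk M.E - M.rk S) * (-1) ^ S.card *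
          (∏ e ∈ M.E \ S, (1 + (if e ∈ A then (-1 : Polynomial ℤ) else 0))) *
          (∏ e ∈ S, (1 + Polynomial.X * (if e ∈ A then (-1 : Polynomial ℤ) else 0))))
      = (1 - Polynomial.X) ^ A.card * (-1) ^ A.card *
          ((-1) ^ (Mcon.rk Mcon.E) * Mcon.tutte (1 - Polynomial.X) 0) := by
  rw [sum_powerset_substitute hA
      (fun S => (Polynomial.X : Polynomial ℤ) ^ (M.rk M.E - M.rk S) * (-1) ^ S.card),
    FinMatroid.neg_one_pow_rk_mul_tutte_one_sub_zero, hcE, mul_assoc]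
  congr 1
  rw [mul_sum]
  refine sum_congr rfl fun T hT => ?_
  have hT : T ⊆ M.E \ A := mem_powerset.1 hT
  rw [FinMatroid.rk_sdiff_sub_rk_of_contract hA hcrk hT,
    card_union_of_disjoint (disjoint_of_subset_left hT sdiff_disjoint), pow_add]
  ring
end

section
/- The equivariant reduced characteristic polynomial satisfies (q−1)·χ̂_M(q) = (−1)^{rk(M)}·T̂_M(1−q, 0, q, 1), i.e. (−1)^{rk(M)}·T̂_M(1−q,0,q,1) = Σ_{S⊆E} q^{rk(M)−rk_M(S)} (−1)^{|S|} ∏_{e∉S}(1+t_e) ∏_{e∈S}(1+q·t_e). -/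
open Finset MvPolynomial

/-! The identity holds summand by summand: at `x = 1 - q`, `y = 0` the summand of `S` carries
`(-q) ^ (rk E - rk S) * (-1) ^ (|S| - rk S)`, and since `(rk E - rk S) + (|S| - rk S)` has the parity
of `rk E + |S|`, the factor `(-1) ^ rk E` turns the sign into `(-1) ^ |S|`. -/

theorem neg_one_pow_mul_neg_one_pow_sub_mul_neg_one_pow_sub {R : Type*} [Monoid R]
    [HasDistribNeg R] {r n k : ℕ} (hr : k ≤ r) (hn : k ≤ n) :
    (-1 : R) ^ r * (-1) ^ (r - k) * (-1) ^ (n - k) = (-1) ^ n := by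
  obtain ⟨m, rfl⟩ := Nat.exists_eq_add_of_le hr
  obtain ⟨l, rfl⟩ := Nat.exists_eq_add_of_le hn
  rw [Nat.add_sub_cancel_left, Nat.add_sub_cancel_left, ← pow_add, ← pow_add,
    show k + m + m + l = k + l + 2 * m by ring, pow_add _ (k + l), pow_mul, neg_one_sq, one_pow,
    mul_one]

/-- (q−1)·χ̂_M(q) = (−1)^{rk(M)}·T̂_M(1−q,0,q,1), i.e.
(−1)^{rk(M)}·T̂_M(1−q,0,q,1) = Σ_{S⊆E} q^{rk(M)−rk_M(S)}(−1)^{|S|}∏_{e∉S}(1+t_e)∏_{e∈S}(1+q·t_e). -/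
theorem eqTutte_charPoly_evaluation {α : Type} [DecidableEq α]
    (M : FinMatroid α) {R : Type} [CommRing R] (q : R) (t : α → R) :
    (-1) ^ (M.rk M.E) * M.eqTutte (1 - q) 0 q 1 t =
      ∑ S ∈ M.E.powerset,
        q ^ (M.rk M.E - M.rk S) * (-1) ^ S.card *
          (∏ e ∈ M.E \ S, (1 + t e)) * (∏ e ∈ S, (1 + q * t e)) := by
  unfold FinMatroid.eqTutte
  rw [mul_sum]
  refine sum_congr rfl fun S hS => ?_
  have hsign : (-1 : R) ^ M.rk M.E * (-1) ^ (M.rk M.E - M.rk S) * (-1) ^ (S.card - M.rk S) =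
      (-1) ^ S.card :=
    neg_one_pow_mul_neg_one_pow_sub_mul_neg_one_pow_sub (M.rk_mono (mem_powerset.1 hS))
      (M.rk_le_card S)
  rw [show (1 - q - 1 : R) = -q by ring, zero_sub, neg_pow q]
  simp only [one_mul]
  linear_combination (q ^ (M.rk M.E - M.rk S) * (∏ e ∈ S, (1 + q * t e)) *
    ∏ e ∈ M.E \ S, (1 + t e)) * hsign
end
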